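/- arXiv:2008.02676 — 2 statements merged into one kernel-verified Lean document; each statement's English description precedes it below -/
import Mathlib

section
/- Let f : (ℝ^d)^n × ℝ → (ℝ^d)^n be continuous in time and Lipschitz in the state, and suppose f is permutation equivariant in its state argument, i.e., f(σ • z, t) = σ • f(z, t) for every permutation σ of the n components. Then for any initial condition z(t₁) = z₁, the unique solution z⋆(t) of the ODE ż(t) = f(z(t), t) on [t₁, t₂] is permutation equivariant with respect to the initial value: the solution starting from σ • z₁ at time t₁ equals σ • z⋆(t) for all t ∈ [t₁, t₂]. -/
/-- Permutation equivariant ODE: if the vector field `f` is Lipschitz in the state, continuous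
in time, and permutation equivariant in the state, then the (unique) solution of
`ż = f(z, t)` on `[t₁, t₂]` is permutation equivariant with respect to the initial value:
the solution starting from `σ • z(t₁)` equals `σ • z(t)` throughout. -/
theorem exODE_perm_equivariant {d n : ℕ}
    (f : (Fin n → (Fin d → ℝ)) → ℝ → (Fin n → (Fin d → ℝ)))
    (Klip : NNReal)
    (hlip : ∀ t : ℝ, LipschitzWith Klip (fun z => f z t))
    (hcont : ∀ z, Continuous (fun t => f z t))
    (hequiv : ∀ (σ : Equiv.Perm (Fin n)) (z : Fin n → (Fin d → ℝ)) (t : ℝ),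
      f (fun i => z (σ⁻¹ i)) t = fun i => f z t (σ⁻¹ i))
    (t₁ t₂ : ℝ) (σ : Equiv.Perm (Fin n))
    (z zσ : ℝ → (Fin n → (Fin d → ℝ)))
    (hz : ∀ t ∈ Set.Icc t₁ t₂, HasDerivAt z (f (z t) t) t)
    (hzσ : ∀ t ∈ Set.Icc t₁ t₂, HasDerivAt zσ (f (zσ t) t) t)
    (hinit : zσ t₁ = fun i => z t₁ (σ⁻¹ i)) :
    ∀ t ∈ Set.Icc t₁ t₂, zσ t = fun i => z t (σ⁻¹ i) := by
  rcases le_or_gt t₁ t₂ with hle | hlt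
  swap
  · intro t ht; exact absurd (ht.1.trans ht.2) (not_le.2 hlt)
  set L : (Fin n → (Fin d → ℝ)) →L[ℝ] (Fin n → (Fin d → ℝ)) :=
    (LinearMap.funLeft ℝ (Fin d → ℝ) ⇑σ⁻¹).toContinuousLinearMap with hL
  have hLapp : ∀ v, L v = fun i => v (σ⁻¹ i) := fun v => rfl
  set w : ℝ → (Fin n → (Fin d → ℝ)) := fun t => L (z t) with hw
  have hw' : ∀ t ∈ Set.Icc t₁ t₂, HasDerivAt w (f (w t) t) t := by
    intro t ht
    have := (L.hasFDerivAt.comp_hasDerivAt t (hz t ht))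
    have heq : L (f (z t) t) = f (w t) t := by
      show L (f (z t) t) = f (L (z t)) t
      rw [hLapp, hLapp, hequiv σ (z t) t]
    rwa [heq] at this
  have key := ODE_solution_unique (v := fun t y => f y t) (K := Klip)
    hlip
    (fun t ht => (hzσ t ht).continuousAt.continuousWithinAt)
    (fun t ht => ((hzσ t (Set.mem_Icc_of_Ico ht)).hasDerivWithinAt))
    (fun t ht => (hw' t ht).continuousAt.continuousWithinAt)
    (fun t ht => ((hw' t (Set.mem_Icc_of_Ico ht)).hasDerivWithinAt))
    (by rw [hinit]; rfl)
  intro t ht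
  exact key ht
end

section
/- Invariance of log-density along an equivariant flow: suppose z : [t₀, t₁] → (ℝ^d)^n solves ż = f(z, t) with f permutation equivariant in z and differentiable in z, and define L(t) := L(t₀) − ∫_{t₀}^{t} Tr(∂f/∂z (z(τ), τ)) dτ. If z̃(t) := σ • z(t) is the solution with initial condition σ • z(t₀) and L̃ is defined analogously with the same initial value L̃(t₀) = L(t₀), then L̃(t) = L(t) for all t ∈ [t₀, t₁]; i.e., the instantaneous change-of-variables log-likelihood correction is permutation invariant along the trajectory. -/
/-! Permuting the `n` blocks is a linear automorphism `P` of the state space that commutes with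
the vector field, so `P ∘ z` solves the same Lipschitz ODE as `z̃` from the same initial value, and
by uniqueness `z̃ = P ∘ z`. Differentiating `f ∘ P = P ∘ f` gives `Df(P z) = P ∘ Df(z) ∘ P⁻¹`, whose
trace is that of `Df(z)`, so the two integrands agree pointwise. -/

open Set

section TraceFDeriv

variable {𝕜 E : Type*} [NontriviallyNormedField 𝕜] [NormedAddCommGroup E] [NormedSpace 𝕜 E]

theorem fderiv_apply_eq_conj_of_comp_eq (P : E ≃L[𝕜] E) {g : E → E} (hg : g ∘ P = P ∘ g)
    (x : E) :
    (fderiv 𝕜 g (P x) : E →ₗ[𝕜] E) = P.toLinearEquiv.conj (fderiv 𝕜 g x : E →ₗ[𝕜] E) := by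
  have hcomp : (fderiv 𝕜 g (P x)).comp (P : E →L[𝕜] E) = (P : E →L[𝕜] E).comp (fderiv 𝕜 g x) := by
    rw [← P.comp_right_fderiv, ← P.comp_fderiv, hg]
  ext v
  simpa [LinearEquiv.conj_apply] using congrArg (fun L : E →L[𝕜] E => L (P.symm v)) hcomp

theorem trace_fderiv_apply_eq_of_comp_eq (P : E ≃L[𝕜] E) {g : E → E} (hg : g ∘ P = P ∘ g)
    (x : E) :
    LinearMap.trace 𝕜 E (fderiv 𝕜 g (P x) : E →ₗ[𝕜] E) =
      LinearMap.trace 𝕜 E (fderiv 𝕜 g x : E →ₗ[𝕜] E) := by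
  rw [fderiv_apply_eq_conj_of_comp_eq P hg, LinearMap.trace_conj']

end TraceFDeriv

section EquivariantODE

variable {E : Type*} [NormedAddCommGroup E] [NormedSpace ℝ E]

theorem HasDerivAt.clm_apply_of_equivariant (P : E →L[ℝ] E) {v : ℝ → E → E}
    (hv : ∀ t x, v t (P x) = P (v t x)) {z : ℝ → E} {t : ℝ} (hz : HasDerivAt z (v t (z t)) t) :
    HasDerivAt (fun s => P (z s)) (v t (P (z t))) t := by
  rw [hv]
  exact P.hasFDerivAt.comp_hasDerivAt t hz

theorem eqOn_clm_comp_of_equivariant (P : E →L[ℝ] E) {v : ℝ → E → E} {K : NNReal}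
    (hlip : ∀ t, LipschitzWith K (v t)) (hv : ∀ t x, v t (P x) = P (v t x)) {z w : ℝ → E}
    {a b : ℝ} (hz : ∀ t ∈ Icc a b, HasDerivAt z (v t (z t)) t)
    (hw : ∀ t ∈ Icc a b, HasDerivAt w (v t (w t)) t) (hinit : w a = P (z a)) :
    EqOn w (fun t => P (z t)) (Icc a b) := by
  have hPz : ∀ t ∈ Icc a b, HasDerivAt (fun s => P (z s)) (v t (P (z t))) t :=
    fun t ht => (hz t ht).clm_apply_of_equivariant P hv
  exact ODE_solution_unique hlip
    (fun t ht => (hw t ht).continuousAt.continuousWithinAt)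
    (fun t ht => (hw t (Ico_subset_Icc_self ht)).hasDerivWithinAt)
    (fun t ht => (hPz t ht).continuousAt.continuousWithinAt)
    (fun t ht => (hPz t (Ico_subset_Icc_self ht)).hasDerivWithinAt) hinit

end EquivariantODE

def permBlocks (𝕜 : Type*) [Semiring 𝕜] {ι : Type*} (E : Type*) [AddCommMonoid E] [Module 𝕜 E]
    [TopologicalSpace E] (σ : Equiv.Perm ι) : (ι → E) ≃L[𝕜] (ι → E) :=
  ContinuousLinearEquiv.piCongrLeft 𝕜 (fun _ => E) σ

theorem permBlocks_apply (𝕜 : Type*) [Semiring 𝕜] {ι : Type*} (E : Type*) [AddCommMonoid E]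
    [Module 𝕜 E] [TopologicalSpace E] (σ : Equiv.Perm ι) (w : ι → E) :
    permBlocks 𝕜 E σ w = fun i => w (σ⁻¹ i) := by
  ext i
  simp [permBlocks, ContinuousLinearEquiv.piCongrLeft, Equiv.piCongrLeft_apply_eq_cast]

theorem log_density_correction_invariant_general {d n : ℕ}
    (f : (Fin n → (Fin d → ℝ)) → ℝ → (Fin n → (Fin d → ℝ)))
    (Klip : NNReal)
    (hlip : ∀ t : ℝ, LipschitzWith Klip (fun z => f z t))
    (hequiv : ∀ (σ : Equiv.Perm (Fin n)) (z : Fin n → (Fin d → ℝ)) (t : ℝ),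
      f (fun i => z (σ⁻¹ i)) t = fun i => f z t (σ⁻¹ i))
    (t₀ t₁ : ℝ) (σ : Equiv.Perm (Fin n)) (L₀ : ℝ)
    (z ztil : ℝ → (Fin n → (Fin d → ℝ)))
    (hz : ∀ t ∈ Set.Icc t₀ t₁, HasDerivAt z (f (z t) t) t)
    (hztil : ∀ t ∈ Set.Icc t₀ t₁, HasDerivAt ztil (f (ztil t) t) t)
    (hinit : ztil t₀ = fun i => z t₀ (σ⁻¹ i)) :
    ∀ t ∈ Set.Icc t₀ t₁,
      L₀ - ∫ τ in t₀..t,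
          LinearMap.trace ℝ _ ((fderiv ℝ (fun w => f w τ) (ztil τ)).toLinearMap) =
      L₀ - ∫ τ in t₀..t,
          LinearMap.trace ℝ _ ((fderiv ℝ (fun w => f w τ) (z τ)).toLinearMap) := by
  intro t ht
  set P := permBlocks ℝ (Fin d → ℝ) σ
  have hPf : ∀ τ w, f (P w) τ = P (f w τ) := fun τ w => by
    simpa only [P, permBlocks_apply] using hequiv σ w τ
  have htraj : EqOn ztil (fun τ => P (z τ)) (Icc t₀ t₁) :=
    eqOn_clm_comp_of_equivariant (P : _ →L[ℝ] _) (v := fun τ w => f w τ) hlip hPf hz hztil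
      (hinit.trans (permBlocks_apply ℝ _ σ (z t₀)).symm)
  congr 1
  refine intervalIntegral.integral_congr fun τ hτ => ?_
  have hτ : τ ∈ Icc t₀ t₁ := Icc_subset_Icc_right ht.2 (uIcc_of_le ht.1 ▸ hτ)
  simp only [htraj hτ]
  exact trace_fderiv_apply_eq_of_comp_eq P (g := fun w => f w τ) (funext fun w => hPf τ w) (z τ)

/-- Invariance of the instantaneous change-of-variables log-likelihood correction along an
equivariant flow: if `z` solves `ż = f(z,t)` with `f` Lipschitz, differentiable and
permutation equivariant in the state, and `z̃` is the solution with initial condition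
`σ • z(t₀)`, then the log-density corrections computed along `z̃` and `z` (from a common
initial value `L₀`) agree. -/
theorem log_density_correction_invariant {d n : ℕ}
    (f : (Fin n → (Fin d → ℝ)) → ℝ → (Fin n → (Fin d → ℝ)))
    (Klip : NNReal)
    (hlip : ∀ t : ℝ, LipschitzWith Klip (fun z => f z t))
    (hdiff : ∀ (t : ℝ), Differentiable ℝ (fun z => f z t))
    (hequiv : ∀ (σ : Equiv.Perm (Fin n)) (z : Fin n → (Fin d → ℝ)) (t : ℝ),
      f (fun i => z (σ⁻¹ i)) t = fun i => f z t (σ⁻¹ i))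
    (t₀ t₁ : ℝ) (σ : Equiv.Perm (Fin n)) (L₀ : ℝ)
    (z ztil : ℝ → (Fin n → (Fin d → ℝ)))
    (hz : ∀ t ∈ Set.Icc t₀ t₁, HasDerivAt z (f (z t) t) t)
    (hztil : ∀ t ∈ Set.Icc t₀ t₁, HasDerivAt ztil (f (ztil t) t) t)
    (hinit : ztil t₀ = fun i => z t₀ (σ⁻¹ i)) :
    ∀ t ∈ Set.Icc t₀ t₁,
      L₀ - ∫ τ in t₀..t,
          LinearMap.trace ℝ _ ((fderiv ℝ (fun w => f w τ) (ztil τ)).toLinearMap) =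
      L₀ - ∫ τ in t₀..t,
          LinearMap.trace ℝ _ ((fderiv ℝ (fun w => f w τ) (z τ)).toLinearMap) :=
  log_density_correction_invariant_general f Klip hlip hequiv t₀ t₁ σ L₀ z ztil hz hztil hinit
end
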